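/- Let E be the incidence matrix of a (n,k,γ,δ,λ)-BIBD and let the assignment matrix be A = E^T ∈ ℝ^{k×n}. Let B ∈ ℝ^{(mk)×n} be the baseline encoding matrix obtained by stacking A vertically m times, i.e. B^T = [A^T | A^T | … | A^T]. Then for every non-straggler set 𝓕 ⊆ {1,…,n} with |𝓕| = n−s ≥ 1, the approximation error satisfies Err_𝓕(B) = mk − δ²(n−s)/(δ + (n−s−1)λ). -/

import Mathlib

open MeasureTheory Matrix

noncomputable section

/-- Random-diagonal encoding matrix: the vertical stack of `A * D_1, …, A * D_m`,
with rows indexed by `Fin m × κ` (block `i`, row `r`). -/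
def encB {m : ℕ} {κ ν : Type*} (A : Matrix κ ν ℝ) (d : (Fin m × ν) → ℝ) :
    Matrix (Fin m × κ) ν ℝ :=
  Matrix.of fun p j => A p.2 j * d (p.1, j)

/-- The target matrix `F = [f_1 | … | f_m]`, where `f_i` is `1` on the `i`-th block. -/
def Fmat (m : ℕ) (κ : Type*) : Matrix (Fin m × κ) (Fin m) ℝ :=
  Matrix.of fun p i => if p.1 = i then 1 else 0

/-- Column submatrix corresponding to the non-straggler set `𝓕`. -/
def subCols {α ν : Type*} (M : Matrix α ν ℝ) (𝓕 : Finset ν) : Matrix α ↥𝓕 ℝ :=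
  M.submatrix id (fun j => (j : ν))

/-- Squared Frobenius norm. -/
def frobSq {α β : Type*} [Fintype α] [Fintype β] (M : Matrix α β ℝ) : ℝ :=
  ∑ i, ∑ j, (M i j) ^ 2

/-- The approximation error `Err_𝓕(B) = inf_R ‖B_𝓕 R − F‖_F²`. -/
noncomputable def err {m : ℕ} {κ ν : Type*} [Fintype κ] [Fintype ν]
    (B : Matrix (Fin m × κ) ν ℝ) (𝓕 : Finset ν) : ℝ :=
  ⨅ R : Matrix ↥𝓕 (Fin m) ℝ, frobSq (subCols B 𝓕 * R - Fmat m κ)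

/-- Vertical stacking of the matrices `A_1, …, A_m`. -/
def stackB {m : ℕ} {κ ν : Type*} (Am : Fin m → Matrix κ ν ℝ) :
    Matrix (Fin m × κ) ν ℝ :=
  Matrix.of fun p l => Am p.1 p.2 l

/-!
`Err_𝓕(B)` is a least-squares problem: by Pythagoras, any `R₀` solving the normal equations
`B_𝓕ᵀ (B_𝓕 R₀ - F) = 0` attains the infimum. For the stacked BIBD matrix, the Gram matrix
`A_𝓕ᵀ A_𝓕 = (δ - λ) I + λ J` has constant row sums `D = δ + (n - s - 1) λ` and `A_𝓕ᵀ 1 = δ 1`,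
so the constant matrix `R₀ = δ / (m D)` solves them. Evaluating the residual with
`‖A_𝓕 1‖² = (n - s) D` and `1ᵀ A_𝓕 1 = (n - s) δ` gives `m k - δ² (n - s) / D`.
-/

section LeastSquares

variable {α β γ : Type*} [Fintype α] [Fintype β] [Fintype γ]

lemma frobSq_nonneg (M : Matrix α β ℝ) : 0 ≤ frobSq M :=
  Finset.sum_nonneg fun _ _ => Finset.sum_nonneg fun _ _ => sq_nonneg _

lemma frobSq_eq_trace (M : Matrix α β ℝ) : frobSq M = trace (Mᵀ * M) := by
  simp only [frobSq, trace, diag, mul_apply, transpose_apply, sq]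
  exact Finset.sum_comm

lemma frobSq_add_of_transpose_mul_eq_zero (X Y : Matrix α β ℝ) (h : Xᵀ * Y = 0) :
    frobSq (X + Y) = frobSq X + frobSq Y := by
  have h' : Yᵀ * X = 0 := by rw [← transpose_transpose X, ← transpose_mul, h, transpose_zero]
  simp only [frobSq_eq_trace, transpose_add, Matrix.add_mul, Matrix.mul_add, trace_add, h, h',
    trace_zero]
  ring

lemma iInf_frobSq_mul_sub_eq_of_normal_eq (M : Matrix α β ℝ) (F : Matrix α γ ℝ)
    (R₀ : Matrix β γ ℝ) (h : Mᵀ * (M * R₀ - F) = 0) :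
    ⨅ R : Matrix β γ ℝ, frobSq (M * R - F) = frobSq (M * R₀ - F) := by
  have pythagoras : ∀ R, frobSq (M * R - F) = frobSq (M * (R - R₀)) + frobSq (M * R₀ - F) := by
    intro R
    rw [← frobSq_add_of_transpose_mul_eq_zero]
    · congr 1; rw [Matrix.mul_sub]; abel
    · rw [transpose_mul, Matrix.mul_assoc, h, Matrix.mul_zero]
  refine le_antisymm (ciInf_le ⟨0, ?_⟩ R₀) (le_ciInf fun R => ?_)
  · rintro _ ⟨R, rfl⟩
    exact frobSq_nonneg _
  · rw [pythagoras R]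
    linarith [frobSq_nonneg (M * (R - R₀))]

end LeastSquares

lemma sum_sub_ite_sq {m : ℕ} (x : ℝ) (a : Fin m) :
    ∑ i : Fin m, (x - if a = i then 1 else 0) ^ 2 = m * x ^ 2 - 2 * x + 1 := by
  have expand : ∀ i : Fin m,
      (x - if a = i then 1 else 0) ^ 2 = x ^ 2 - if a = i then 2 * x - 1 else 0 := by
    intro i; split_ifs <;> ring
  simp only [expand, Finset.sum_sub_distrib, Finset.sum_ite_eq, Finset.mem_univ, if_true,
    Finset.sum_const, Finset.card_univ, Fintype.card_fin, nsmul_eq_mul]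
  ring

section Stack

variable {κ ι : Type*} [Fintype κ] [Fintype ι] (m : ℕ) (A : Matrix κ ι ℝ) {δ D : ℝ}

theorem iInf_frobSq_stackB_sub_Fmat (hm : m ≠ 0) (hD : D ≠ 0) (hcol : ∀ j, ∑ r, A r j = δ)
    (hgram : ∀ j, ∑ r, A r j * ∑ j', A r j' = D) :
    ⨅ R : Matrix ι (Fin m) ℝ, frobSq (stackB (fun _ : Fin m => A) * R - Fmat m κ) =
      m * Fintype.card κ - δ ^ 2 * Fintype.card ι / D := by
  set c := δ / (m * D) with hc
  set t : κ → ℝ := fun r => ∑ j, A r j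
  set R₀ : Matrix ι (Fin m) ℝ := of fun _ _ => c
  have residual : stackB (fun _ : Fin m => A) * R₀ - Fmat m κ =
      of fun p i => c * t p.2 - if p.1 = i then 1 else 0 := by
    ext p i
    simp [R₀, stackB, Fmat, mul_apply, t, Finset.sum_mul, mul_comm]
  have sum_t : ∑ r, t r = Fintype.card ι * δ := by
    simp only [t]
    exact Finset.sum_comm.trans (by simp [hcol])
  have sum_t_sq : ∑ r, t r ^ 2 = Fintype.card ι * D := by
    simp only [sq, t, Finset.sum_mul]
    rw [Finset.sum_comm]
    simp [hgram]
  rw [iInf_frobSq_mul_sub_eq_of_normal_eq _ _ R₀, residual]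
  · have row : ∀ r, (m * (c * t r) ^ 2 - 2 * (c * t r) + 1) =
        (m * c ^ 2) * t r ^ 2 - (2 * c) * t r + 1 := fun r => by ring
    simp only [frobSq, of_apply, Fintype.sum_prod_type, sum_sub_ite_sq, row,
      Finset.sum_add_distrib, Finset.sum_sub_distrib, ← Finset.mul_sum, sum_t, sum_t_sq,
      Finset.sum_const, Finset.card_univ, Fintype.card_prod, Fintype.card_fin, nsmul_eq_mul,
      Nat.cast_mul, mul_one]
    rw [hc]
    field_simp
    ring
  · have block : ∀ j i (a : Fin m),
        ∑ r, A r j * (c * t r - if a = i then 1 else 0) = c * D - if a = i then δ else 0 := by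
      intro j i a
      split_ifs <;> simp [mul_sub, Finset.sum_sub_distrib, mul_left_comm _ c, ← Finset.mul_sum,
        t, hgram, hcol]
    rw [residual]
    ext j i
    simp only [mul_apply, transpose_apply, stackB, of_apply, Fintype.sum_prod_type,
      block, Finset.sum_sub_distrib, Finset.sum_ite_eq', Finset.mem_univ, if_true,
      Finset.sum_const, Finset.card_univ, Fintype.card_fin, nsmul_eq_mul, Matrix.zero_apply]
    rw [hc]
    field_simp
    ring

end Stack

lemma sum_mul_self_eq_sum_of_binary {κ : Type*} [Fintype κ] (x : κ → ℝ)
    (hx : ∀ r, x r = 0 ∨ x r = 1) : ∑ r, x r * x r = ∑ r, x r :=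
  Finset.sum_congr rfl fun r _ => by rcases hx r with h | h <;> simp [h]

lemma sum_mul_sum_eq_of_gram {ν κ : Type*} [Fintype κ] [DecidableEq ν] (E : Matrix ν κ ℝ)
    {δ lam : ℝ} (hdiag : ∀ i, ∑ r, E i r * E i r = δ)
    (hoff : ∀ i i', i ≠ i' → ∑ r, E i r * E i' r = lam) (𝓕 : Finset ν) {i : ν} (hi : i ∈ 𝓕) :
    ∑ r, E i r * ∑ i' ∈ 𝓕, E i' r = δ + (𝓕.card - 1) * lam := by
  have gram : ∀ i', ∑ r, E i r * E i' r = lam + if i = i' then δ - lam else 0 := by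
    intro i'
    split_ifs with h
    · rw [← h, hdiag]; ring
    · rw [hoff i i' h, add_zero]
  simp only [Finset.mul_sum]
  rw [Finset.sum_comm]
  simp only [gram, Finset.sum_add_distrib, Finset.sum_ite_eq, hi, if_true, Finset.sum_const,
    nsmul_eq_mul]
  ring

theorem stmt19_general (n k m δ lam s : ℕ) (hm : 0 < m) (hs : s < n)
    (E : Matrix (Fin n) (Fin k) ℝ)
    (hbin : ∀ i j, E i j = 0 ∨ E i j = 1)
    (hδ : ∀ i, ∑ j, E i j = (δ : ℝ))
    (hlam : ∀ i i', i ≠ i' → ∑ j, E i j * E i' j = (lam : ℝ))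
    (hδlam : lam < δ)
    (𝓕 : Finset (Fin n)) (hcard : 𝓕.card = n - s) :
    err (stackB fun _ : Fin m => Eᵀ) 𝓕 =
      (m : ℝ) * k - (δ : ℝ) ^ 2 * ((n : ℝ) - s) / ((δ : ℝ) + ((n : ℝ) - s - 1) * lam) := by
  have hq : (𝓕.card : ℝ) = n - s := by rw [hcard, Nat.cast_sub hs.le]
  have hD : 0 < (δ : ℝ) + ((n : ℝ) - s - 1) * lam := by
    have : (1 : ℝ) ≤ n - s := by rw [← hq]; exact_mod_cast (by omega : 1 ≤ 𝓕.card)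
    nlinarith [(Nat.cast_nonneg lam : (0 : ℝ) ≤ lam), (by exact_mod_cast hδlam : (lam : ℝ) < δ)]
  have hdiag i : ∑ r, E i r * E i r = δ := by
    rw [sum_mul_self_eq_sum_of_binary _ (hbin i), hδ]
  have hgram (j : 𝓕) : ∑ r, subCols Eᵀ 𝓕 r j * ∑ j', subCols Eᵀ 𝓕 r j' =
      δ + ((n : ℝ) - s - 1) * lam := by
    have hsum r : ∑ i' : 𝓕, E i' r = ∑ i' ∈ 𝓕, E i' r := Finset.sum_coe_sort 𝓕 (E · r)
    simp only [subCols, submatrix_apply, transpose_apply, id, hsum, ← hq]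
    exact sum_mul_sum_eq_of_gram E hdiag hlam 𝓕 j.2
  have key := iInf_frobSq_stackB_sub_Fmat m (subCols Eᵀ 𝓕) hm.ne' hD.ne' (fun j => hδ j) hgram
  rw [Fintype.card_coe, hq, Fintype.card_fin] at key
  exact key

/-- exact approximation error of the baseline construction
(stacking the BIBD-transpose assignment matrix `m` times) for any non-straggler set of
size `n − s ≥ 1`. -/
theorem stmt19 (n k m γ δ lam s : ℕ) (hm : 0 < m) (hs : s < n)
    (E : Matrix (Fin n) (Fin k) ℝ)
    (hbin : ∀ i j, E i j = 0 ∨ E i j = 1)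
    (hγ : ∀ j, ∑ i, E i j = (γ : ℝ))
    (hδ : ∀ i, ∑ j, E i j = (δ : ℝ))
    (hlam : ∀ i i', i ≠ i' → ∑ j, E i j * E i' j = (lam : ℝ))
    (hδlam : lam < δ)
    (𝓕 : Finset (Fin n)) (hcard : 𝓕.card = n - s) :
    err (stackB fun _ : Fin m => Eᵀ) 𝓕 =
      (m : ℝ) * k - (δ : ℝ) ^ 2 * ((n : ℝ) - s) / ((δ : ℝ) + ((n : ℝ) - s - 1) * lam) :=
  stmt19_general n k m δ lam s hm hs E hbin hδ hlam hδlam 𝓕 hcard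

end
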